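/- arXiv:2411.19347 — 13 statements merged into one kernel-verified Lean document; each statement's English description precedes it below -/
import Mathlib

section
/- Let (P, ≤, ', 0, 1) be a bounded orthogonal saturated poset, let a ∈ P and A, B ⊆ P with A ≤₂ B. Then p_a(A) ≤₂ p_a(B). -/
/-- Set of lower bounds of a subset of a poset. -/
def lbs {P : Type*} [PartialOrder P] (A : Set P) : Set P := {x | ∀ a ∈ A, x ≤ a}

/-- Set of upper bounds of a subset of a poset. -/
def ubs {P : Type*} [PartialOrder P] (A : Set P) : Set P := {x | ∀ a ∈ A, a ≤ x}

/-- Set of maximal elements of a subset of a poset. -/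
def maxE {P : Type*} [PartialOrder P] (A : Set P) : Set P :=
  {x | x ∈ A ∧ ∀ y ∈ A, x ≤ y → x = y}

/-- Set of minimal elements of a subset of a poset. -/
def minE {P : Type*} [PartialOrder P] (A : Set P) : Set P :=
  {x | x ∈ A ∧ ∀ y ∈ A, y ≤ x → x = y}

/-- A poset is saturated if every lower bound of a pair lies below a maximal lower
bound of that pair, and every upper bound of a pair lies above a minimal upper bound. -/
def Saturated (P : Type*) [PartialOrder P] : Prop :=
  (∀ a b x : P, x ∈ lbs {a, b} → ∃ m ∈ maxE (lbs {a, b}), x ≤ m) ∧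
  (∀ a b x : P, x ∈ ubs {a, b} → ∃ m ∈ minE (ubs {a, b}), m ≤ x)

/-- Orthogonality of a poset with a unary operation `c`:
if `a ≤ b` then `a ∨ b'` exists, and if `a' ≤ b` then `a ∧ b` exists. -/
def Orthogonal {P : Type*} [PartialOrder P] (c : P → P) : Prop :=
  (∀ a b : P, a ≤ b → ∃ j, IsLUB {a, c b} j) ∧
  (∀ a b : P, c a ≤ b → ∃ m, IsGLB {a, b} m)

/-- Generalized Sasaki operation `x ⊙ y = Min U(x, y') ∧ y` (set-valued). -/
def sOdot {P : Type*} [PartialOrder P] (c : P → P) (x y : P) : Set P :=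
  {w | ∃ u ∈ minE (ubs {x, c y}), IsGLB {u, y} w}

/-- Generalized Sasaki operation `x → y = x' ∨ Max L(x, y)` (set-valued). -/
def sImp {P : Type*} [PartialOrder P] (c : P → P) (x y : P) : Set P :=
  {w | ∃ l ∈ maxE (lbs {x, y}), IsLUB {c x, l} w}

/-- `A ≤₁ B`: every element of `A` lies below some element of `B`. -/
def le1 {P : Type*} [PartialOrder P] (A B : Set P) : Prop := ∀ a ∈ A, ∃ b ∈ B, a ≤ b

/-- `A ≤₂ B`: every element of `B` lies above some element of `A`. -/
def le2 {P : Type*} [PartialOrder P] (A B : Set P) : Prop := ∀ b ∈ B, ∃ a ∈ A, a ≤ b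

/-- Condition (A1): `x ⊙ y ≤₂ z` implies `x ≤₁ y → z`. -/
def CondA1 {P : Type*} [PartialOrder P] (c : P → P) : Prop :=
  ∀ x y z : P, le2 (sOdot c x y) {z} → le1 {x} (sImp c y z)

/-- Condition (A2): `x ≤₁ y → z` implies `x ⊙ y ≤₂ z`. -/
def CondA2 {P : Type*} [PartialOrder P] (c : P → P) : Prop :=
  ∀ x y z : P, le1 {x} (sImp c y z) → le2 (sOdot c x y) {z}

/-- The generalized Sasaki projection `p_a(x) = Min U(x, a') ∧ a` (set-valued). -/
def sProj {P : Type*} [PartialOrder P] (c : P → P) (a x : P) : Set P :=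
  {w | ∃ u ∈ minE (ubs {x, c a}), IsGLB {u, a} w}

/-- The generalized Sasaki projection extended to subsets. -/
def sProjSet {P : Type*} [PartialOrder P] (c : P → P) (a : P) (A : Set P) : Set P :=
  ⋃ x ∈ A, sProj c a x

/-- An orthomodular poset: a bounded poset with an antitone involution which is a
complementation, such that `x ≤ y'` implies `x ∨ y` exists, and `x ≤ y` implies
`y = x ∨ (y' ∨ x)'` (orthomodularity). -/
def OrthomodularPoset {P : Type*} [PartialOrder P] [BoundedOrder P] (c : P → P) : Prop :=
  (∀ x y : P, x ≤ y → c y ≤ c x) ∧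
  (∀ x : P, c (c x) = x) ∧
  (∀ x : P, IsLUB {x, c x} ⊤) ∧
  (∀ x : P, IsGLB {x, c x} ⊥) ∧
  (∀ x y : P, x ≤ c y → ∃ j, IsLUB {x, y} j) ∧
  (∀ x y : P, x ≤ y → ∀ j, IsLUB {c y, x} j → IsLUB {x, c j} y)

/-- `c` is a complementation: `x ∨ x' = 1` and `x ∧ x' = 0` for all `x`. -/
def Complementation {P : Type*} [PartialOrder P] [BoundedOrder P] (c : P → P) : Prop :=
  ∀ x : P, IsLUB {x, c x} ⊤ ∧ IsGLB {x, c x} ⊥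

/-- A poset is modular if `x ≤ z` implies `L(U(x,y), z) = L(U(x, L(y,z)))`. -/
def ModularPoset (P : Type*) [PartialOrder P] : Prop :=
  ∀ x y z : P, x ≤ z → lbs (ubs {x, y} ∪ {z}) = lbs (ubs (insert x (lbs {y, z})))

/-- In a bounded orthogonal saturated poset, `A ≤₂ B` implies
`p_a(A) ≤₂ p_a(B)`. -/
theorem stmt_1 {P : Type*} [PartialOrder P] [BoundedOrder P] (c : P → P)
    (hsat : Saturated P) (horth : Orthogonal c) (a : P) (A B : Set P)
    (hAB : le2 A B) : le2 (sProjSet c a A) (sProjSet c a B) := by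
  intro w hw
  simp only [sProjSet, Set.mem_iUnion] at hw
  obtain ⟨x, hxB, u, ⟨hu_ub, hu_min⟩, hglb⟩ := hw
  obtain ⟨y, hyA, hyx⟩ := hAB x hxB
  have hu' : u ∈ ubs {y, c a} := by
    intro z hz
    rcases hz with rfl | hz
    · exact le_trans hyx (hu_ub x (Or.inl rfl))
    · exact hu_ub z (Or.inr hz)
  obtain ⟨u', hu'min, hu'u⟩ := hsat.2 y (c a) u hu'
  have hca : c a ≤ u' := hu'min.1 (c a) (Or.inr rfl)
  obtain ⟨m, hm⟩ := horth.2 a u' hca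
  rw [Set.pair_comm] at hm
  refine ⟨m, ?_, ?_⟩
  · simp only [sProjSet, Set.mem_iUnion]
    exact ⟨y, hyA, u', hu'min, hm⟩
  · apply hglb.2
    intro z hz
    rcases hz with rfl | hz
    · exact le_trans (hm.1 (Set.mem_insert _ _)) hu'u
    · simp only [Set.mem_singleton_iff] at hz
      subst hz
      exact hm.1 (Set.mem_insert_of_mem _ rfl)
end

section
/- Let (P, ≤, ', 0, 1) be a saturated orthomodular poset and a ∈ P. Then p_a(a') = {0}, and p_a(x) = {x} for every x ∈ P with x ≤ a. -/
lemma ubs_eq_upperBounds {P : Type*} [PartialOrder P] (A : Set P) :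
    ubs A = upperBounds A := by
  ext u; constructor
  · intro h a ha; exact h a ha
  · intro h a ha; exact h ha

lemma minE_of_lub {P : Type*} [PartialOrder P] {x y t : P} (h : IsLUB {x, y} t) :
    minE (ubs {x, y}) = {t} := by
  ext u
  constructor
  · rintro ⟨hu, hmin⟩
    have htu : t ≤ u := h.2 (by rw [← ubs_eq_upperBounds]; exact hu)
    have ht : t ∈ ubs {x, y} := by rw [ubs_eq_upperBounds]; exact h.1
    exact (hmin t ht htu).symm ▸ rfl
  · rintro rfl
    refine ⟨by rw [ubs_eq_upperBounds]; exact h.1, ?_⟩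
    intro y' hy' hle
    exact le_antisymm (h.2 (by rw [← ubs_eq_upperBounds]; exact hy')) hle

lemma glb_of_lub_compl {P : Type*} [PartialOrder P] {c : P → P}
    (hmono : ∀ x y : P, x ≤ y → c y ≤ c x) (hinv : ∀ x : P, c (c x) = x)
    {p q r : P} (h : IsLUB {c p, c q} (c r)) : IsGLB {p, q} r := by
  have hle : ∀ {s u : P}, c s ≤ c u → u ≤ s := by
    intro s u hsu
    have := hmono _ _ hsu
    rwa [hinv, hinv] at this
  constructor
  · rintro z (rfl | hz)
    · exact hle (h.1 (by left; rfl))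
    · rcases hz with rfl
      exact hle (h.1 (by right; rfl))
  · intro w hw
    have h1 : w ≤ p := hw (by left; rfl)
    have h2 : w ≤ q := hw (by right; rfl)
    refine hle (h.2 ?_)
    rintro z (rfl | hz)
    · exact hmono _ _ h1
    · rcases hz with rfl; exact hmono _ _ h2

/-- In a saturated orthomodular poset, `p_a(a') = {0}` and
`p_a(x) = {x}` for every `x ≤ a`. -/
theorem stmt_2 {P : Type*} [PartialOrder P] [BoundedOrder P] (c : P → P)
    (hsat : Saturated P) (homp : OrthomodularPoset c) (a : P) :
    sProj c a (c a) = {(⊥ : P)} ∧ ∀ x : P, x ≤ a → sProj c a x = {x} := by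
  obtain ⟨hmono, hinv, htop, hbot, hjoin, hom⟩ := homp
  constructor
  · -- p_a(a') = {⊥}
    have hlub : IsLUB {c a, c a} (c a) := by
      constructor
      · rintro z (rfl | hz)
        · rfl
        · rcases hz with rfl; rfl
      · intro w hw; exact hw (by left; rfl)
    have hmin : minE (ubs {c a, c a}) = {c a} := minE_of_lub hlub
    have hglb : IsGLB {c a, a} ⊥ := by
      have := hbot a
      constructor
      · rintro z (rfl | hz)
        · exact this.1 (by right; rfl)
        · rcases hz with rfl; exact this.1 (by left; rfl)
      · intro w hw
        exact this.2 (by rintro z (rfl | hz)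
                         · exact hw (by right; rfl)
                         · rcases hz with rfl; exact hw (by left; rfl))
    ext w
    simp only [sProj, Set.mem_setOf_eq, Set.mem_singleton_iff, hmin]
    constructor
    · rintro ⟨u, rfl, hg⟩
      exact hg.unique hglb
    · rintro rfl
      exact ⟨c a, rfl, hglb⟩
  · intro x hx
    obtain ⟨t, ht⟩ := hjoin x (c a) (by rw [hinv]; exact hx)
    have hmin : minE (ubs {x, c a}) = {t} := minE_of_lub ht
    have ht' : IsLUB {c a, x} t := by
      constructor
      · rintro z (rfl | hz)
        · exact ht.1 (by right; rfl)
        · rcases hz with rfl; exact ht.1 (by left; rfl)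
      · intro w hw
        exact ht.2 (by rintro z (rfl | hz)
                       · exact hw (by right; rfl)
                       · rcases hz with rfl; exact hw (by left; rfl))
    -- apply orthomodularity to c a ≤ c x
    have hca : c a ≤ c x := hmono _ _ hx
    have hlub2 : IsLUB {c (c x), c a} t := by rwa [hinv]
    have hom' : IsLUB {c a, c t} (c x) := hom (c a) (c x) hca t hlub2
    have hglb : IsGLB {a, t} x := glb_of_lub_compl hmono hinv hom'
    have hglb' : IsGLB {t, a} x := by
      constructor
      · rintro z (rfl | hz)
        · exact hglb.1 (by right; rfl)
        · rcases hz with rfl; exact hglb.1 (by left; rfl)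
      · intro w hw
        exact hglb.2 (by rintro z (rfl | hz)
                         · exact hw (by right; rfl)
                         · rcases hz with rfl; exact hw (by left; rfl))
    ext w
    simp only [sProj, Set.mem_setOf_eq, Set.mem_singleton_iff, hmin]
    constructor
    · rintro ⟨u, rfl, hg⟩
      exact hg.unique hglb'
    · rintro rfl
      exact ⟨t, rfl, hglb'⟩
end

section
/- Let (P, ≤, ', 0, 1) be a saturated orthomodular poset, a ∈ P and A ⊆ P. Then p_a(p_a(A)) = p_a(A). -/
lemma sProj_fixed {P : Type*} [PartialOrder P] [BoundedOrder P] {c : P → P}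
    (anti : ∀ x y : P, x ≤ y → c y ≤ c x) (inv : ∀ x : P, c (c x) = x)
    (jex : ∀ x y : P, x ≤ c y → ∃ j, IsLUB {x, y} j)
    (oml : ∀ x y : P, x ≤ y → ∀ j, IsLUB {c y, x} j → IsLUB {x, c j} y)
    {a w : P} (hw : w ≤ a) : sProj c a w = {w} := by
  obtain ⟨j, hj⟩ := jex w (c a) (by rw [inv]; exact hw)
  have hjub : j ∈ ubs ({w, c a} : Set P) := by
    intro b hb; exact hj.1 hb
  have hjmin : j ∈ minE (ubs ({w, c a} : Set P)) := by
    refine ⟨hjub, fun y hy hyj => ?_⟩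
    have : j ≤ y := hj.2 (fun b hb => hy b hb)
    exact le_antisymm this hyj |>.symm ▸ rfl
  -- claim: IsGLB {j, a} w
  have hglbw : IsGLB ({j, a} : Set P) w := by
    constructor
    · rintro b (rfl | rfl)
      · exact hj.1 (Set.mem_insert _ _)
      · exact hw
    · intro l hl
      have hlj : l ≤ j := hl (Set.mem_insert _ _)
      have hla : l ≤ a := hl (by simp)
      -- orthomodularity with x = c a, y = c w
      have h1 : c a ≤ c w := anti w a hw
      have hj' : IsLUB {c (c w), c a} j := by rw [inv]; exact hj
      have h2 : IsLUB ({c a, c j} : Set P) (c w) := oml (c a) (c w) h1 j hj'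
      have hcl : c w ≤ c l := by
        apply h2.2
        rintro b (rfl | rfl)
        · exact anti l a hla
        · exact anti l j hlj
      have := anti (c w) (c l) hcl
      rwa [inv, inv] at this
  ext v
  simp only [sProj, Set.mem_setOf_eq, Set.mem_singleton_iff]
  constructor
  · rintro ⟨u, ⟨huub, humin⟩, hgv⟩
    have hju : j ≤ u := hj.2 (fun b hb => huub b hb)
    have huj : u = j := humin j hjub hju
    subst huj
    exact hgv.unique hglbw
  · rintro rfl
    exact ⟨j, hjmin, hglbw⟩

/-- In a saturated orthomodular poset, `p_a(p_a(A)) = p_a(A)`. -/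
theorem stmt_3 {P : Type*} [PartialOrder P] [BoundedOrder P] (c : P → P)
    (hsat : Saturated P) (homp : OrthomodularPoset c) (a : P) (A : Set P) :
    sProjSet c a (sProjSet c a A) = sProjSet c a A := by
  obtain ⟨anti, inv, -, -, jex, oml⟩ := homp
  have key : ∀ w : P, w ≤ a → sProj c a w = {w} :=
    fun w hw => sProj_fixed anti inv jex oml hw
  have sub : ∀ x w : P, w ∈ sProj c a x → w ≤ a := by
    rintro x w ⟨u, hu, hg⟩
    exact hg.1 (by simp)
  ext v
  simp only [sProjSet, Set.mem_iUnion, exists_prop]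
  constructor
  · rintro ⟨w, ⟨x, hx, hwx⟩, hv⟩
    rw [key w (sub x w hwx)] at hv
    cases hv
    exact ⟨x, hx, hwx⟩
  · rintro ⟨x, hx, hv⟩
    refine ⟨v, ⟨x, hx, hv⟩, ?_⟩
    rw [key v (sub x v hv)]
    rfl
end

section
/- Let (P, ≤, ', 0, 1) be a bounded saturated poset with a unary operation '. Then the following are equivalent: (1) for all x, y ∈ P, every u ∈ Min U(x, y') has a meet u ∧ y in P and every l ∈ Max L(x, y) has a join x' ∨ l in P (i.e. the generalized Sasaki operations x ⊙ y and x → y are defined for all x, y ∈ P); (2) P is orthogonal. -/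
/-- In a bounded saturated poset with a unary operation, the generalized
Sasaki operations are everywhere defined iff the poset is orthogonal. -/
theorem stmt_4 {P : Type*} [PartialOrder P] [BoundedOrder P] (c : P → P)
    (hsat : Saturated P) :
    ((∀ x y : P, (∀ u ∈ minE (ubs {x, c y}), ∃ m, IsGLB {u, y} m) ∧
        (∀ l ∈ maxE (lbs {x, y}), ∃ j, IsLUB {c x, l} j)) ↔ Orthogonal c) := by
  constructor
  · intro h
    constructor
    · intro a b hab
      have ha : a ∈ maxE (lbs {b, a}) := by
        refine ⟨?_, ?_⟩
        · intro z hz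
          simp only [Set.mem_insert_iff, Set.mem_singleton_iff] at hz
          rcases hz with h | h
          · subst h; exact hab
          · subst h; exact le_rfl
        · intro y hy hay
          exact le_antisymm hay (hy a (by simp))
      obtain ⟨j, hj⟩ := (h b a).2 a ha
      exact ⟨j, by rwa [Set.pair_comm]⟩
    · intro a b hab
      have hb : b ∈ minE (ubs {b, c a}) := by
        refine ⟨?_, ?_⟩
        · intro z hz
          simp only [Set.mem_insert_iff, Set.mem_singleton_iff] at hz
          rcases hz with h | h
          · subst h; exact le_rfl
          · subst h; exact hab
        · intro y hy hyb
          exact le_antisymm (hy b (by simp)) hyb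
      obtain ⟨m, hm⟩ := (h b a).1 b hb
      exact ⟨m, by rwa [Set.pair_comm]⟩
  · intro ⟨h1, h2⟩ x y
    constructor
    · intro u hu
      have : c y ≤ u := hu.1 (c y) (by simp)
      obtain ⟨m, hm⟩ := h2 y u this
      exact ⟨m, by rwa [Set.pair_comm]⟩
    · intro l hl
      have : l ≤ x := hl.1 x (by simp)
      obtain ⟨j, hj⟩ := h1 l x this
      exact ⟨j, by rwa [Set.pair_comm]⟩
end

section
/- Let (P, ≤, ', 0, 1) be a bounded orthogonal saturated poset. Then condition (A1) holds if and only if for all x, y ∈ P one has the set identity Min U(x, y') = {y' ∨ (u ∧ y) : u ∈ Min U(x, y')} (the joins y' ∨ (u ∧ y) exist by orthogonality since u ∧ y ≤ y). -/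
/-- Key lemma: under (A1), each minimal upper bound `u` of `{x, c y}` satisfies
`u = c y ∨ (u ∧ y)`. -/
lemma stmt9_key {P : Type*} [PartialOrder P] (c : P → P) (hA1 : CondA1 c)
    {x y u m : P} (hu : u ∈ minE (ubs {x, c y})) (hm : IsGLB {u, y} m) :
    IsLUB {c y, m} u := by
  have hcyu : c y ≤ u := hu.1 (c y) (Set.mem_insert_iff.mpr (Or.inr rfl))
  have hmu : m ≤ u := hm.1 (Set.mem_insert _ _)
  have hmy : m ≤ y := hm.1 (Set.mem_insert_iff.mpr (Or.inr rfl))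
  -- u is the unique minimal element of ubs {u, c y}
  have humin : u ∈ minE (ubs {u, c y}) := by
    refine ⟨fun a ha => ?_, fun v hv hvu => le_antisymm ?_ hvu⟩
    · rcases Set.mem_insert_iff.mp ha with h | h
      · exact h ▸ le_refl u
      · exact (Set.mem_singleton_iff.mp h) ▸ hcyu
    · exact hv u (Set.mem_insert _ _)
  have h2 : le2 (sOdot c u y) {m} := by
    intro b hb
    rw [Set.mem_singleton_iff] at hb
    exact ⟨m, ⟨u, humin, hm⟩, hb ▸ le_refl m⟩
  have h1 := hA1 u y m h2 u rfl
  obtain ⟨j, ⟨l, hl, hj⟩, huj⟩ := h1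
  -- l = m since lbs {y, m} has maximum m
  have hlm : l = m := by
    have hlem : l ≤ m := hl.1 m (Set.mem_insert_iff.mpr (Or.inr rfl))
    exact hl.2 m (fun a ha => by
      rcases Set.mem_insert_iff.mp ha with h | h
      · exact h ▸ hmy
      · exact (Set.mem_singleton_iff.mp h) ▸ le_refl m) hlem
  subst hlm
  -- j = u
  have hju : j ≤ u := hj.2 (by
    intro a ha
    rcases Set.mem_insert_iff.mp ha with h | h
    · exact h ▸ hcyu
    · exact (Set.mem_singleton_iff.mp h) ▸ hmu)
  have : j = u := le_antisymm hju huj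
  exact this ▸ hj

/-- In a bounded orthogonal saturated poset, (A1) holds iff
`Min U(x, y') = {y' ∨ (u ∧ y) : u ∈ Min U(x, y')}` for all `x, y`. -/
theorem stmt_9 {P : Type*} [PartialOrder P] [BoundedOrder P] (c : P → P)
    (hsat : Saturated P) (horth : Orthogonal c) :
    CondA1 c ↔ ∀ x y : P,
      minE (ubs {x, c y}) =
        {w | ∃ u ∈ minE (ubs {x, c y}), ∃ m, IsGLB {u, y} m ∧ IsLUB {c y, m} w} := by
  constructor
  · intro hA1 x y
    ext w
    constructor
    · intro hw
      have hcyw : c y ≤ w := hw.1 (c y) (Set.mem_insert_iff.mpr (Or.inr rfl))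
      obtain ⟨m, hm⟩ := horth.2 y w hcyw
      rw [Set.pair_comm] at hm
      exact ⟨w, hw, m, hm, stmt9_key c hA1 hw hm⟩
    · rintro ⟨u, hu, m, hm, hw⟩
      have := stmt9_key c hA1 hu hm
      have : w = u := hw.unique this
      exact this ▸ hu
  · intro hEq x y z hle2
    obtain ⟨a, ⟨u, hu, hm⟩, haz⟩ := hle2 z rfl
    have hmy : a ≤ y := hm.1 (Set.mem_insert_iff.mpr (Or.inr rfl))
    -- w := c y ∨ a exists
    obtain ⟨w, hw⟩ := horth.1 a y hmy
    rw [Set.pair_comm] at hw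
    have hwmin : w ∈ minE (ubs {x, c y}) := by
      rw [hEq x y]; exact ⟨u, hu, a, hm, hw⟩
    have hxw : x ≤ w := hwmin.1 x (Set.mem_insert _ _)
    -- a ∈ lbs {y, z}, saturate
    obtain ⟨l, hl, hal⟩ := hsat.1 y z a (by
      intro t ht
      rcases Set.mem_insert_iff.mp ht with h | h
      · exact h ▸ hmy
      · exact (Set.mem_singleton_iff.mp h) ▸ haz)
    have hly : l ≤ y := hl.1 y (Set.mem_insert _ _)
    obtain ⟨j, hj⟩ := horth.1 l y hly
    rw [Set.pair_comm] at hj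
    have hwj : w ≤ j := hw.2 (by
      intro t ht
      rcases Set.mem_insert_iff.mp ht with h | h
      · exact h ▸ hj.1 (Set.mem_insert _ _)
      · exact (Set.mem_singleton_iff.mp h) ▸
          le_trans hal (hj.1 (Set.mem_insert_iff.mpr (Or.inr rfl))))
    intro a' ha'
    rw [Set.mem_singleton_iff] at ha'
    exact ⟨j, ⟨l, hl, hj⟩, ha' ▸ le_trans hxw hwj⟩
end

section
/- Let (P, ≤, ', 0, 1) be a bounded orthogonal saturated poset. Then condition (A1) holds if and only if for all x, y ∈ P one has Min U(x, y') ≤₂ {y' ∨ (u ∧ y) : u ∈ Min U(x, y')} (the joins y' ∨ (u ∧ y) exist by orthogonality since u ∧ y ≤ y). -/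
/-- In a bounded orthogonal saturated poset, (A1) holds iff
`Min U(x, y') ≤₂ {y' ∨ (u ∧ y) : u ∈ Min U(x, y')}` for all `x, y`. -/
theorem stmt_10 {P : Type*} [PartialOrder P] [BoundedOrder P] (c : P → P)
    (hsat : Saturated P) (horth : Orthogonal c) :
    CondA1 c ↔ ∀ x y : P,
      le2 (minE (ubs {x, c y}))
        {w | ∃ u ∈ minE (ubs {x, c y}), ∃ m, IsGLB {u, y} m ∧ IsLUB {c y, m} w} := by
  constructor
  · intro hA1 x y w hw
    obtain ⟨u, hu, m, hglb, hlub⟩ := hw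
    have hm : le2 (sOdot c x y) {m} := by
      intro b hb
      rcases hb with rfl
      exact ⟨b, ⟨u, hu, hglb⟩, le_refl b⟩
    obtain ⟨w', ⟨l, hl, hlub'⟩, hxw'⟩ := hA1 x y m hm x rfl
    have hmy : m ≤ y := hglb.1 (Set.mem_insert_of_mem _ rfl)
    have hmmem : m ∈ lbs {y, m} := by
      intro a ha
      rcases ha with rfl | rfl
      · exact hmy
      · exact le_refl _
    have hlm : l ≤ m := hl.1 m (Set.mem_insert_of_mem _ rfl)
    have hl_eq : l = m := hl.2 m hmmem hlm
    rw [hl_eq] at hlub'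
    have hww : w' = w := hlub'.unique hlub
    have hwub : w ∈ ubs {x, c y} := by
      intro a ha
      rcases ha with rfl | rfl
      · exact hww ▸ hxw'
      · exact hlub.1 (Set.mem_insert _ _)
    obtain ⟨v, hv, hvw⟩ := hsat.2 x (c y) w hwub
    exact ⟨v, hv, hvw⟩
  · intro h x y z hz
    obtain ⟨w0, ⟨u, hu, hglb⟩, hw0z⟩ := hz z rfl
    have hw0y : w0 ≤ y := hglb.1 (Set.mem_insert_of_mem _ rfl)
    have hw0lb : w0 ∈ lbs {y, z} := by
      intro a ha
      rcases ha with rfl | rfl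
      · exact hw0y
      · exact hw0z
    obtain ⟨l, hl, hw0l⟩ := hsat.1 y z w0 hw0lb
    have hly : l ≤ y := hl.1 y (Set.mem_insert _ _)
    obtain ⟨j, hj⟩ := horth.1 l y hly
    have hj' : IsLUB {c y, l} j := by rwa [Set.pair_comm]
    obtain ⟨w', hw'⟩ := horth.1 w0 y hw0y
    have hw'' : IsLUB {c y, w0} w' := by rwa [Set.pair_comm]
    obtain ⟨v, hv, hvw'⟩ := h x y w' ⟨u, hu, w0, hglb, hw''⟩
    have hxv : x ≤ v := hv.1 x (Set.mem_insert _ _)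
    have hjub : j ∈ upperBounds {w0, c y} := by
      intro a ha
      rcases ha with rfl | rfl
      · exact le_trans hw0l (hj.1 (Set.mem_insert _ _))
      · exact hj.1 (Set.mem_insert_of_mem _ rfl)
    have hxj : x ≤ j := le_trans (le_trans hxv hvw') (hw'.2 hjub)
    intro a ha
    rcases ha with rfl
    exact ⟨j, ⟨l, hl, hj'⟩, hxj⟩
end

section
/- Let (P, ≤, ', 0, 1) be a bounded orthogonal saturated poset. Then condition (A1) holds if and only if for all x, y ∈ P with x' ≤ y one has y = x' ∨ (y ∧ x) (the meet y ∧ x and the join x' ∨ (y ∧ x) exist by orthogonality). -/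
/-- In a bounded orthogonal saturated poset, (A1) holds iff
`x' ≤ y` implies `y = x' ∨ (y ∧ x)` for all `x, y`. -/
theorem stmt_11 {P : Type*} [PartialOrder P] [BoundedOrder P] (c : P → P)
    (hsat : Saturated P) (horth : Orthogonal c) :
    CondA1 c ↔ ∀ x y : P, c x ≤ y → ∀ m, IsGLB {y, x} m → IsLUB {c x, m} y := by

  constructor
  · intro hA1 a b hab m hm
    have hmem : le2 (sOdot c b a) {m} := by
      intro z hz
      rw [Set.mem_singleton_iff] at hz
      refine ⟨m, ⟨b, ⟨?_, ?_⟩, hm⟩, hz.ge⟩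
      · intro t ht
        rcases ht with rfl | ht
        · exact le_refl _
        · rw [Set.mem_singleton_iff] at ht; exact le_of_eq_of_le ht hab
      · intro y hy hyb
        exact le_antisymm (hy b (Set.mem_insert b _)) hyb
    obtain ⟨w, ⟨l, hl, hw⟩, hbw⟩ := hA1 b a m hmem b rfl
    have hma : m ≤ a := hm.1 (Set.mem_insert_iff.mpr (Or.inr rfl))
    have hmb : m ≤ b := hm.1 (Set.mem_insert b _)
    have hlm : l = m := by
      refine hl.2 m ?_ (hl.1 m (Set.mem_insert_iff.mpr (Or.inr rfl)))
      intro t ht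
      rcases ht with rfl | ht
      · exact hma
      · rw [Set.mem_singleton_iff] at ht; exact ht.ge
    subst hlm
    have hub : b ∈ upperBounds {c a, l} := by
      intro t ht
      rcases ht with rfl | ht
      · exact hab
      · rw [Set.mem_singleton_iff] at ht; exact le_of_eq_of_le ht hmb
    have : w = b := le_antisymm (hw.2 hub) hbw
    subst this
    exact hw
  · intro hOM x y z hle
    obtain ⟨w, ⟨u, ⟨hu_ub, _⟩, hw⟩, hwz⟩ := hle z rfl
    have hwy : w ≤ y := hw.1 (Set.mem_insert_iff.mpr (Or.inr rfl))
    have hwlb : w ∈ lbs {y, z} := by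
      intro t ht
      rcases ht with rfl | ht
      · exact hwy
      · rw [Set.mem_singleton_iff] at ht; exact le_of_le_of_eq hwz ht.symm
    obtain ⟨l, hl, hwl⟩ := hsat.1 y z w hwlb
    have hly : l ≤ y := hl.1 y (Set.mem_insert y _)
    obtain ⟨j, hj⟩ := horth.1 l y hly
    rw [Set.pair_comm] at hj
    have hcyu : c y ≤ u := hu_ub (c y) (Set.mem_insert_iff.mpr (Or.inr rfl))
    have hxu : x ≤ u := hu_ub x (Set.mem_insert x _)
    have hlub : IsLUB {c y, w} u := hOM y u hcyu w hw
    have hcyj : c y ≤ j := hj.1 (Set.mem_insert (c y) _)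
    have hlj : l ≤ j := hj.1 (Set.mem_insert_iff.mpr (Or.inr rfl))
    have huj : u ≤ j := by
      refine hlub.2 ?_
      intro t ht
      rcases ht with rfl | ht
      · exact hcyj
      · rw [Set.mem_singleton_iff] at ht; exact le_of_eq_of_le ht (le_trans hwl hlj)
    intro t ht
    rw [Set.mem_singleton_iff] at ht; subst ht
    exact ⟨j, ⟨l, hl, hj⟩, le_trans hxu huj⟩
end

section
/- Let (P, ≤, ', 0, 1) be a bounded orthogonal saturated poset. Then condition (A2) holds if and only if for all x, y ∈ P one has the set identity {x ∧ (l ∨ x') : l ∈ Max L(x, y)} = Max L(x, y) (the joins l ∨ x' and the meets x ∧ (l ∨ x') exist by orthogonality since l ≤ x and x' ≤ l ∨ x'). -/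
/-- Membership in the lower bounds of a pair. -/
lemma mem_lb_pair {P : Type*} [PartialOrder P] {a b x : P} (h1 : x ≤ a) (h2 : x ≤ b) :
    x ∈ lowerBounds ({a, b} : Set P) := by
  intro t ht
  rcases Set.mem_insert_iff.mp ht with h | h
  · exact h ▸ h1
  · exact (Set.mem_singleton_iff.mp h) ▸ h2

/-- Membership in the set `lbs` of a pair. -/
lemma mem_lbs_pair {P : Type*} [PartialOrder P] {a b x : P} (h1 : x ≤ a) (h2 : x ≤ b) :
    x ∈ lbs ({a, b} : Set P) := by
  intro t ht
  rcases Set.mem_insert_iff.mp ht with h | h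
  · exact h ▸ h1
  · exact (Set.mem_singleton_iff.mp h) ▸ h2

/-- Membership in the set `ubs` of a pair. -/
lemma mem_ubs_pair {P : Type*} [PartialOrder P] {a b x : P} (h1 : a ≤ x) (h2 : b ≤ x) :
    x ∈ ubs ({a, b} : Set P) := by
  intro t ht
  rcases Set.mem_insert_iff.mp ht with h | h
  · exact h ▸ h1
  · exact (Set.mem_singleton_iff.mp h) ▸ h2

/-- Key computation: under (A2), if `l` is a maximal lower bound of `{x,y}`,
`j = l ∨ x'` and `w = x ∧ j`, then `w = l`. -/
lemma key_A2 {P : Type*} [PartialOrder P] (c : P → P) (h2 : CondA2 c)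
    {x y l j w : P} (hl : l ∈ maxE (lbs {x, y})) (hj : IsLUB {l, c x} j)
    (hw : IsGLB {x, j} w) : w = l := by
  have hcxj : c x ≤ j := hj.1 (Set.mem_insert_of_mem _ rfl)
  have hlj : l ≤ j := hj.1 (Set.mem_insert _ _)
  have hprem : le1 {j} (sImp c x y) := by
    intro a ha
    refine ⟨j, ⟨l, hl, ?_⟩, le_of_eq (Set.eq_of_mem_singleton ha)⟩
    rwa [Set.pair_comm]
  obtain ⟨w', ⟨u, hu, hglb'⟩, hw'y⟩ := h2 j x y hprem y rfl
  have hju : j ≤ u := hu.1 j (Set.mem_insert _ _)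
  have huj : u = j := hu.2 j (mem_ubs_pair le_rfl hcxj) hju
  subst huj
  have hglb'' : IsGLB {x, u} w' := by rwa [Set.pair_comm] at hglb'
  have hww' : w = w' := hw.unique hglb''
  subst hww'
  have hwx : w ≤ x := hw.1 (Set.mem_insert _ _)
  have hlx : l ≤ x := hl.1 x (Set.mem_insert _ _)
  have hlw : l ≤ w := hw.2 (mem_lb_pair hlx hlj)
  exact (hl.2 w (mem_lbs_pair hwx hw'y) hlw).symm

/-- In a bounded orthogonal saturated poset, (A2) holds iff
`{x ∧ (l ∨ x') : l ∈ Max L(x, y)} = Max L(x, y)` for all `x, y`. -/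
theorem stmt_12 {P : Type*} [PartialOrder P] [BoundedOrder P] (c : P → P)
    (hsat : Saturated P) (horth : Orthogonal c) :
    CondA2 c ↔ ∀ x y : P,
      {w | ∃ l ∈ maxE (lbs {x, y}), ∃ j, IsLUB {l, c x} j ∧ IsGLB {x, j} w} =
        maxE (lbs {x, y}) := by
  constructor
  · intro h2 x y
    ext w
    constructor
    · rintro ⟨l, hl, j, hj, hw⟩
      rw [key_A2 c h2 hl hj hw]; exact hl
    · intro hl
      have hlx : w ≤ x := hl.1 x (Set.mem_insert _ _)
      obtain ⟨j, hj⟩ := horth.1 w x hlx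
      have hcxj : c x ≤ j := hj.1 (Set.mem_insert_of_mem _ rfl)
      obtain ⟨m, hm⟩ := horth.2 x j hcxj
      have hml := key_A2 c h2 hl hj hm
      exact ⟨w, hl, j, hj, hml ▸ hm⟩
  · intro hid x y z hle
    obtain ⟨j, ⟨l, hl, hj⟩, hxj⟩ := hle x rfl
    have hcyj : c y ≤ j := hj.1 (Set.mem_insert _ _)
    have hlj : l ≤ j := hj.1 (Set.mem_insert_of_mem _ rfl)
    have hjub : j ∈ ubs {x, c y} := mem_ubs_pair hxj hcyj
    obtain ⟨u, hu, huj⟩ := hsat.2 x (c y) j hjub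
    have hcyu : c y ≤ u := hu.1 (c y) (Set.mem_insert_of_mem _ rfl)
    obtain ⟨w, hw⟩ := horth.2 y u hcyu
    obtain ⟨w', hw'⟩ := horth.2 y j hcyj
    have hw'mem : w' ∈ maxE (lbs {y, z}) := by
      rw [← hid y z]
      exact ⟨l, hl, j, by rwa [Set.pair_comm] at hj, hw'⟩
    have hlw' : l ≤ w' := hw'.2 (mem_lb_pair (hl.1 y (Set.mem_insert _ _)) hlj)
    have hw'l : w' = l := (hl.2 w' hw'mem.1 hlw').symm
    intro b hb
    refine ⟨w, ⟨u, hu, by rwa [Set.pair_comm] at hw⟩, le_of_le_of_eq ?_ (Set.eq_of_mem_singleton hb).symm⟩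
    have hwy : w ≤ y := hw.1 (Set.mem_insert _ _)
    have hwu : w ≤ u := hw.1 (Set.mem_insert_of_mem _ rfl)
    have hwl : w ≤ w' := hw'.2 (mem_lb_pair hwy (hwu.trans huj))
    exact (hwl.trans_eq hw'l).trans (hl.1 z (Set.mem_insert_of_mem _ rfl))
end

section
/- Let (P, ≤, ', 0, 1) be a bounded orthogonal saturated poset. Then condition (A2) holds if and only if for all x, y ∈ P one has {x ∧ (l ∨ x') : l ∈ Max L(x, y)} ≤₁ Max L(x, y) (the joins l ∨ x' and the meets x ∧ (l ∨ x') exist by orthogonality since l ≤ x and x' ≤ l ∨ x'). -/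
/-- In a bounded orthogonal saturated poset, (A2) holds iff
`{x ∧ (l ∨ x') : l ∈ Max L(x, y)} ≤₁ Max L(x, y)` for all `x, y`. -/
theorem stmt_13 {P : Type*} [PartialOrder P] [BoundedOrder P] (c : P → P)
    (hsat : Saturated P) (horth : Orthogonal c) :
    CondA2 c ↔ ∀ x y : P,
      le1 {w | ∃ l ∈ maxE (lbs {x, y}), ∃ j, IsLUB {l, c x} j ∧ IsGLB {x, j} w}
        (maxE (lbs {x, y})) := by
  obtain ⟨hmax, hmin⟩ := hsat
  constructor
  · intro hA2 x y w hw
    obtain ⟨l, hl, j, hj, hglb⟩ := hw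
    have hj' : IsLUB {c x, l} j := by rwa [Set.pair_comm] at hj
    have hle1 : le1 {j} (sImp c x y) := fun a ha =>
      ⟨j, ⟨l, hl, hj'⟩, le_of_eq ha⟩
    obtain ⟨a, ⟨u, hu, hglb'⟩, hay⟩ := hA2 j x y hle1 y rfl
    have hju : j ≤ u := hu.1 j (by simp)
    have hjub : j ∈ ubs {j, c x} := by
      intro t ht
      rcases ht with rfl | rfl
      · exact le_rfl
      · exact hj.1 (by simp)
    have huj : u = j := hu.2 j hjub hju
    rw [huj] at hglb'
    have haw : a = w := by
      have h2 : IsGLB {x, j} a := by rwa [Set.pair_comm] at hglb'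
      exact h2.unique hglb
    rw [haw] at hay
    have hwx : w ≤ x := hglb.1 (by simp)
    have hwl : w ∈ lbs {x, y} := by
      intro t ht
      rcases ht with rfl | rfl
      · exact hwx
      · exact hay
    exact hmax x y w hwl
  · intro h x y z hle
    obtain ⟨w0, ⟨l, hl, hlub⟩, hxw0⟩ := hle x rfl
    have hcyw0 : c y ≤ w0 := hlub.1 (by simp)
    have hw0ub : w0 ∈ ubs {x, c y} := by
      intro t ht
      rcases ht with rfl | rfl
      · exact hxw0
      · exact hcyw0
    obtain ⟨u, hu, huw0⟩ := hmin x (c y) w0 hw0ub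
    have hcyu : c y ≤ u := hu.1 (c y) (by simp)
    obtain ⟨a, ha⟩ := horth.2 y u hcyu
    obtain ⟨w1, hw1⟩ := horth.2 y w0 hcyw0
    have hw1S : w1 ∈ {w | ∃ l ∈ maxE (lbs {y, z}), ∃ j, IsLUB {l, c y} j ∧ IsGLB {y, j} w} :=
      ⟨l, hl, w0, by rwa [Set.pair_comm] at hlub, hw1⟩
    obtain ⟨m, hm, hw1m⟩ := h y z w1 hw1S
    have hay : a ≤ y := ha.1 (by simp)
    have hau : a ≤ u := ha.1 (by simp)
    have haw1 : a ≤ w1 := by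
      apply hw1.2
      intro t ht
      rcases ht with rfl | rfl
      · exact hay
      · exact hau.trans huw0
    have hmz : m ≤ z := hm.1 z (by simp)
    intro b hb
    rcases hb with rfl
    refine ⟨a, ⟨u, hu, by rwa [Set.pair_comm] at ha⟩, ?_⟩
    exact (haw1.trans hw1m).trans hmz
end

section
/- Let (P, ≤, ', 0, 1) be a bounded orthogonal saturated poset. Then condition (A2) holds if and only if for all x, y ∈ P with x ≤ y one has x = (y' ∨ x) ∧ y (the join y' ∨ x and the meet (y' ∨ x) ∧ y exist by orthogonality). -/
lemma mem_ubs_pair' {P : Type*} [PartialOrder P] {p q x : P} :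
    x ∈ ubs {p, q} ↔ p ≤ x ∧ q ≤ x := by simp [ubs]

lemma mem_lbs_pair' {P : Type*} [PartialOrder P] {p q x : P} :
    x ∈ lbs {p, q} ↔ x ≤ p ∧ x ≤ q := by simp [lbs]

lemma mem_ub_pair' {P : Type*} [PartialOrder P] {p q x : P} :
    x ∈ upperBounds {p, q} ↔ p ≤ x ∧ q ≤ x := by simp [upperBounds]

lemma mem_lb_pair' {P : Type*} [PartialOrder P] {p q x : P} :
    x ∈ lowerBounds {p, q} ↔ x ≤ p ∧ x ≤ q := by simp [lowerBounds]

/-- In a bounded orthogonal saturated poset, (A2) holds iff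
`x ≤ y` implies `x = (y' ∨ x) ∧ y` for all `x, y`. -/
theorem stmt_14 {P : Type*} [PartialOrder P] [BoundedOrder P] (c : P → P)
    (hsat : Saturated P) (horth : Orthogonal c) :
    CondA2 c ↔ ∀ x y : P, x ≤ y → ∀ j, IsLUB {c y, x} j → IsGLB {j, y} x := by
  constructor
  · intro hA2 x y hxy j hj
    obtain ⟨hcyj, hxj⟩ := mem_ub_pair'.mp hj.1
    have hxmax : x ∈ maxE (lbs {y, x}) := by
      refine ⟨mem_lbs_pair'.mpr ⟨hxy, le_rfl⟩, ?_⟩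
      intro t ht hxt
      exact le_antisymm hxt (mem_lbs_pair'.mp ht).2
    have hle1 : le1 {x} (sImp c y x) := by
      intro a ha
      exact ⟨j, ⟨x, hxmax, hj⟩, le_of_eq_of_le (Set.eq_of_mem_singleton ha) hxj⟩
    obtain ⟨w, hw, hwx⟩ := hA2 x y x hle1 x rfl
    obtain ⟨u, hu, hglb⟩ := hw
    obtain ⟨hxu, hcyu⟩ := mem_ubs_pair'.mp hu.1
    have hju : j ≤ u := hj.2 (mem_ub_pair'.mpr ⟨hcyu, hxu⟩)
    have huj : u = j := hu.2 j (mem_ubs_pair'.mpr ⟨hxj, hcyj⟩) hju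
    have hxw : x ≤ w := hglb.2 (mem_lb_pair'.mpr ⟨hxu, hxy⟩)
    have hwx' : w = x := le_antisymm hwx hxw
    rw [huj, hwx'] at hglb
    exact hglb
  · intro hcond x y z hle b hb
    obtain rfl : b = z := Set.eq_of_mem_singleton hb
    obtain ⟨w, ⟨l, hl, hw⟩, hxw⟩ := hle x rfl
    obtain ⟨hly, hlz⟩ := mem_lbs_pair'.mp hl.1
    have hglb_l : IsGLB {w, y} l := hcond l y hly w hw
    have hcyw : c y ≤ w := (mem_ub_pair'.mp hw.1).1
    obtain ⟨u, hu, huw⟩ := hsat.2 x (c y) w (mem_ubs_pair'.mpr ⟨hxw, hcyw⟩)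
    have hcyu : c y ≤ u := (mem_ubs_pair'.mp hu.1).2
    obtain ⟨t, ht⟩ := horth.2 y u hcyu
    have ht' : IsGLB {u, y} t := by rwa [Set.pair_comm] at ht
    obtain ⟨htu, hty⟩ := mem_lb_pair'.mp ht'.1
    refine ⟨t, ⟨u, hu, ht'⟩, ?_⟩
    have htl : t ≤ l := hglb_l.2 (mem_lb_pair'.mpr ⟨htu.trans huw, hty⟩)
    exact htl.trans hlz
end

section
/- Let (P, ≤, ', 0, 1) be a bounded orthogonal saturated poset. Then the generalized Sasaki operations form an adjoint pair if and only if both of the following hold: (iii) for all x, y ∈ P, x' ≤ y implies y = x' ∨ (y ∧ x), and (vi) for all x, y ∈ P, x ≤ y implies x = (y' ∨ x) ∧ y (all indicated meets and joins exist by orthogonality). -/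
/-- In a bounded orthogonal saturated poset, the generalized Sasaki
operations form an adjoint pair iff (iii) `x' ≤ y → y = x' ∨ (y ∧ x)` and
(vi) `x ≤ y → x = (y' ∨ x) ∧ y` both hold. -/
theorem stmt_15 {P : Type*} [PartialOrder P] [BoundedOrder P] (c : P → P)
    (hsat : Saturated P) (horth : Orthogonal c) :
    (CondA1 c ∧ CondA2 c) ↔
      ((∀ x y : P, c x ≤ y → ∀ m, IsGLB {y, x} m → IsLUB {c x, m} y) ∧
       (∀ x y : P, x ≤ y → ∀ j, IsLUB {c y, x} j → IsGLB {j, y} x)) := by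
  obtain ⟨hsatL, hsatU⟩ := hsat
  obtain ⟨horth1, horth2⟩ := horth
  have pairmem : ∀ (a b t : P), a ≤ t → b ≤ t → t ∈ ubs {a, b} := by
    intro a b t h1 h2 p hp
    rcases hp with rfl | hp
    · exact h1
    · rw [Set.mem_singleton_iff] at hp; subst hp; exact h2
  have pairmemL : ∀ (a b t : P), t ≤ a → t ≤ b → t ∈ lbs {a, b} := by
    intro a b t h1 h2 p hp
    rcases hp with rfl | hp
    · exact h1
    · rw [Set.mem_singleton_iff] at hp; subst hp; exact h2
  have pairUB : ∀ (a b t : P), a ≤ t → b ≤ t → t ∈ upperBounds ({a, b} : Set P) := by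
    intro a b t h1 h2 p hp
    rcases hp with rfl | hp
    · exact h1
    · rw [Set.mem_singleton_iff] at hp; subst hp; exact h2
  have pairLB : ∀ (a b t : P), t ≤ a → t ≤ b → t ∈ lowerBounds ({a, b} : Set P) := by
    intro a b t h1 h2 p hp
    rcases hp with rfl | hp
    · exact h1
    · rw [Set.mem_singleton_iff] at hp; subst hp; exact h2
  constructor
  · rintro ⟨hA1, hA2⟩
    constructor
    · -- (iii)
      intro x y hxy m hm
      have hmx : m ≤ x := hm.1 (by simp)
      have hmy : m ≤ y := hm.1 (by simp)
      have hyU : y ∈ minE (ubs {y, c x}) := by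
        refine ⟨pairmem _ _ _ le_rfl hxy, ?_⟩
        intro t ht hty
        exact le_antisymm (ht y (by simp)) hty
      have h2 : le2 (sOdot c y x) {m} := by
        intro b hb
        rw [Set.mem_singleton_iff] at hb
        exact ⟨m, ⟨y, hyU, hm⟩, le_of_eq hb.symm⟩
      obtain ⟨v, hv, hyv⟩ := hA1 y x m h2 y rfl
      obtain ⟨l, hl, hlv⟩ := hv
      have hlm : l = m := hl.2 m (pairmemL _ _ _ hmx le_rfl) (hl.1 m (by simp))
      subst hlm
      have : v = y := le_antisymm (hlv.2 (pairUB _ _ _ hxy hmy)) hyv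
      exact this ▸ hlv
    · -- (vi)
      intro x y hxy j hj
      have hcyj : c y ≤ j := hj.1 (by simp)
      have hxj : x ≤ j := hj.1 (by simp)
      have hxL : x ∈ maxE (lbs {y, x}) := by
        refine ⟨pairmemL _ _ _ hxy le_rfl, ?_⟩
        intro t ht hxt
        exact le_antisymm hxt (ht x (by simp))
      have h1 : le1 {j} (sImp c y x) := by
        intro a ha
        rw [Set.mem_singleton_iff] at ha
        exact ⟨j, ⟨x, hxL, hj⟩, le_of_eq ha⟩
      obtain ⟨w, hw, hwx⟩ := hA2 j y x h1 x rfl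
      obtain ⟨u, hu, hwglb⟩ := hw
      have huj : u = j := by
        have hjU : j ∈ ubs {j, c y} := pairmem _ _ _ le_rfl hcyj
        exact hu.2 j hjU (hu.1 j (by simp))
      subst huj
      have : x = w := le_antisymm (hwglb.2 (pairLB _ _ _ hxj hxy)) hwx
      exact this ▸ hwglb
  · rintro ⟨hiii, hvi⟩
    constructor
    · -- A1
      intro x y z h
      obtain ⟨w, hw, hwz⟩ := h z rfl
      obtain ⟨u, hu, hwglb⟩ := hw
      have hwy : w ≤ y := hwglb.1 (by simp)
      obtain ⟨l, hl, hwl⟩ := hsatL y z w (pairmemL _ _ _ hwy hwz)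
      have hly : l ≤ y := hl.1 y (by simp)
      obtain ⟨v, hv⟩ := horth1 l y hly
      rw [Set.pair_comm] at hv
      have hcyu : c y ≤ u := hu.1 (c y) (by simp)
      have hxu : x ≤ u := hu.1 x (by simp)
      have hlub : IsLUB {c y, w} u := hiii y u hcyu w hwglb
      have huv : u ≤ v :=
        hlub.2 (pairUB _ _ _ (hv.1 (by simp)) (le_trans hwl (hv.1 (by simp))))
      intro a ha
      rw [Set.mem_singleton_iff] at ha; subst ha
      exact ⟨v, ⟨l, hl, hv⟩, le_trans hxu huv⟩
    · -- A2
      intro x y z h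
      obtain ⟨v, hv, hxv⟩ := h x rfl
      obtain ⟨l, hl, hvl⟩ := hv
      obtain ⟨u, hu, huv⟩ := hsatU x (c y) v (pairmem _ _ _ hxv (hvl.1 (by simp)))
      have hcyu : c y ≤ u := hu.1 (c y) (by simp)
      obtain ⟨w, hw⟩ := horth2 y u hcyu
      rw [Set.pair_comm] at hw
      have hly : l ≤ y := hl.1 y (by simp)
      have hglb : IsGLB {v, y} l := hvi l y hly v hvl
      have hwl : w ≤ l :=
        hglb.2 (pairLB _ _ _ (le_trans (hw.1 (by simp)) huv) (hw.1 (by simp)))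
      have hlz : l ≤ z := hl.1 z (by simp)
      intro b hb
      rw [Set.mem_singleton_iff] at hb; subst hb
      exact ⟨w, ⟨u, hu, hw⟩, le_trans hwl hlz⟩
end

section
/- In every saturated orthomodular poset (P, ≤, ', 0, 1) the generalized Sasaki operations form an adjoint pair, i.e. both conditions (A1) and (A2) hold. -/
section myHelpers

variable {P : Type*} [PartialOrder P] {c : P → P}

lemma my_isLUB_pair_iff {a b m : P} :
    IsLUB {a, b} m ↔ a ≤ m ∧ b ≤ m ∧ ∀ x, a ≤ x → b ≤ x → m ≤ x := by
  constructor
  · rintro ⟨h1, h2⟩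
    refine ⟨h1 (by simp), h1 (by simp), fun x hax hbx => h2 ?_⟩
    intro t ht
    rcases ht with rfl | ht
    · exact hax
    · simp only [Set.mem_singleton_iff] at ht; subst ht; exact hbx
  · rintro ⟨h1, h2, h3⟩
    constructor
    · intro t ht
      rcases ht with rfl | ht
      · exact h1
      · simp only [Set.mem_singleton_iff] at ht; subst ht; exact h2
    · intro x hx
      exact h3 x (hx (by simp)) (hx (by simp))

lemma my_isGLB_pair_iff {a b m : P} :
    IsGLB {a, b} m ↔ m ≤ a ∧ m ≤ b ∧ ∀ x, x ≤ a → x ≤ b → x ≤ m := by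
  constructor
  · rintro ⟨h1, h2⟩
    refine ⟨h1 (by simp), h1 (by simp), fun x hax hbx => h2 ?_⟩
    intro t ht
    rcases ht with rfl | ht
    · exact hax
    · simp only [Set.mem_singleton_iff] at ht; subst ht; exact hbx
  · rintro ⟨h1, h2, h3⟩
    constructor
    · intro t ht
      rcases ht with rfl | ht
      · exact h1
      · simp only [Set.mem_singleton_iff] at ht; subst ht; exact h2
    · intro x hx
      exact h3 x (hx (by simp)) (hx (by simp))

lemma my_lub_to_glb (hanti : ∀ x y : P, x ≤ y → c y ≤ c x) (hinv : ∀ x : P, c (c x) = x)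
    {a b m : P} (h : IsLUB {a, b} m) : IsGLB {c a, c b} (c m) := by
  rw [my_isLUB_pair_iff] at h
  rw [my_isGLB_pair_iff]
  obtain ⟨h1, h2, h3⟩ := h
  refine ⟨hanti _ _ h1, hanti _ _ h2, fun x hxa hxb => ?_⟩
  have hax : a ≤ c x := by have := hanti _ _ hxa; rwa [hinv] at this
  have hbx : b ≤ c x := by have := hanti _ _ hxb; rwa [hinv] at this
  have := hanti _ _ (h3 _ hax hbx)
  rwa [hinv] at this

lemma my_glb_to_lub (hanti : ∀ x y : P, x ≤ y → c y ≤ c x) (hinv : ∀ x : P, c (c x) = x)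
    {a b m : P} (h : IsGLB {a, b} m) : IsLUB {c a, c b} (c m) := by
  rw [my_isGLB_pair_iff] at h
  rw [my_isLUB_pair_iff]
  obtain ⟨h1, h2, h3⟩ := h
  refine ⟨hanti _ _ h1, hanti _ _ h2, fun x hxa hxb => ?_⟩
  have hax : c x ≤ a := by have := hanti _ _ hxa; rwa [hinv] at this
  have hbx : c x ≤ b := by have := hanti _ _ hxb; rwa [hinv] at this
  have := hanti _ _ (h3 _ hax hbx)
  rwa [hinv] at this

end myHelpers


/-- In every saturated orthomodular poset the generalized Sasaki
operations form an adjoint pair, i.e. (A1) and (A2) hold. -/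


theorem stmt_16 {P : Type*} [PartialOrder P] [BoundedOrder P] (c : P → P)
    (hsat : Saturated P) (homp : OrthomodularPoset c) :
    CondA1 c ∧ CondA2 c := by
  obtain ⟨hanti, hinv, _htop, _hbot, hjoin, homl⟩ := homp
  obtain ⟨hsatL, hsatU⟩ := hsat
  constructor
  · -- (A1)
    intro x y z h
    obtain ⟨w, hw, hwz⟩ := h z rfl
    obtain ⟨u, hu, hglb⟩ := hw
    obtain ⟨huU, _humin⟩ := hu
    have hxu : x ≤ u := huU x (by simp)
    have hcyu : c y ≤ u := huU (c y) (by simp)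
    -- w ∈ L(y, z)
    have hwy : w ≤ y := hglb.1 (by simp)
    have hwL : w ∈ lbs ({y, z} : Set P) := by
      intro t ht
      rcases ht with rfl | ht
      · exact hwy
      · simp only [Set.mem_singleton_iff] at ht; subst ht; exact hwz
    obtain ⟨l, hlmax, hwl⟩ := hsatL y z w hwL
    have hly : l ≤ y := hlmax.1 y (by simp)
    have hlz : l ≤ z := hlmax.1 z (by simp)
    -- join s = c y ∨ l exists
    have hlcy : l ≤ c (c y) := by rw [hinv]; exact hly
    obtain ⟨s, hs⟩ := hjoin l (c y) hlcy
    have hs' : IsLUB {c y, l} s := by rwa [Set.pair_comm] at hs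
    -- u = c y ∨ w by orthomodularity
    have hlub_cucy : IsLUB {c u, c y} (c w) := my_glb_to_lub hanti hinv hglb
    have hlub2 : IsLUB {c y, c (c w)} u := homl (c y) u hcyu (c w) hlub_cucy
    have hlub3 : IsLUB {c y, w} u := by rwa [hinv] at hlub2
    -- x ≤ u ≤ s
    have hus : u ≤ s := by
      rw [my_isLUB_pair_iff] at hlub3 hs'
      exact hlub3.2.2 s hs'.1 (le_trans hwl hs'.2.1)
    intro a ha
    simp only [Set.mem_singleton_iff] at ha; subst ha
    exact ⟨s, ⟨l, hlmax, hs'⟩, le_trans hxu hus⟩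
  · -- (A2)
    intro x y z h
    obtain ⟨s, hsmem, hxs⟩ := h x (by simp)
    obtain ⟨l, hlmax, hs⟩ := hsmem
    have hly : l ≤ y := hlmax.1 y (by simp)
    have hlz : l ≤ z := hlmax.1 z (by simp)
    rw [my_isLUB_pair_iff] at hs
    obtain ⟨hcys, hls, hsmin⟩ := hs
    -- s ∈ U(x, c y)
    have hsU : s ∈ ubs ({x, c y} : Set P) := by
      intro t ht
      rcases ht with rfl | ht
      · exact hxs
      · simp only [Set.mem_singleton_iff] at ht; subst ht; exact hcys
    obtain ⟨u, humin, hus⟩ := hsatU x (c y) s hsU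
    have hcyu : c y ≤ u := humin.1 (c y) (by simp)
    -- the meet w = u ∧ y exists
    have hcucy : c u ≤ c (c y) := hanti _ _ hcyu
    obtain ⟨j, hj⟩ := hjoin (c u) (c y) hcucy
    have hglbw : IsGLB {u, y} (c j) := by
      have := my_lub_to_glb hanti hinv hj
      rwa [hinv, hinv] at this
    -- orthomodularity: y = l ∨ c s
    have hy_lub : IsLUB {l, c s} y :=
      homl l y hly s (my_isLUB_pair_iff.mpr ⟨hcys, hls, hsmin⟩)
    -- second application: IsGLB {s, y} l
    have hcscl : c s ≤ c l := hanti _ _ hls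
    have hstep : IsLUB {c s, c y} (c l) :=
      homl (c s) (c l) hcscl y (by rw [hinv]; exact hy_lub)
    have hglb_sy : IsGLB {s, y} l := by
      have h2 := my_lub_to_glb hanti hinv hstep
      rwa [hinv, hinv, hinv] at h2
    -- w ≤ l ≤ z
    rw [my_isGLB_pair_iff] at hglbw hglb_sy
    have hwl : c j ≤ l :=
      hglb_sy.2.2 (c j) (le_trans hglbw.1 hus) hglbw.2.1
    intro b hb
    simp only [Set.mem_singleton_iff] at hb; subst hb
    exact ⟨c j, ⟨u, humin, my_isGLB_pair_iff.mpr hglbw⟩, le_trans hwl hlz⟩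
end

section
/- Let (L, ∨, ∧, ', 0, 1) be a bounded lattice with a unary complementation ' (x ∨ x' = 1 and x ∧ x' = 0 for all x), and suppose L contains elements x, y, z, u with 0 < x < z < 1 and 0 < y < u < 1 such that x ∨ y = x ∨ u = z ∨ y = z ∨ u = 1, x ∧ y = x ∧ u = z ∧ y = z ∧ u = 0, and the set {0, x, y, z, u, 1} is closed under ' (i.e. {0, x, y, z, u, 1} is a subalgebra of L isomorphic to the hexagon O₆). Then the Sasaki operations a ⊙ b := (a ∨ b') ∧ b and a → b := a' ∨ (a ∧ b) do not form an adjoint pair, i.e. it is not the case that for all a, b, c ∈ L: a ⊙ b ≤ c if and only if a ≤ b → c. -/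
/-- A bounded complemented lattice containing a subalgebra isomorphic
to the hexagon O₆ does not admit the Sasaki operations as an adjoint pair. -/
theorem stmt_19 {L : Type*} [Lattice L] [BoundedOrder L] (c : L → L)
    (hcomp : ∀ a : L, a ⊔ c a = ⊤ ∧ a ⊓ c a = ⊥)
    (x y z u : L)
    (h0x : ⊥ < x) (hxz : x < z) (hz1 : z < ⊤)
    (h0y : ⊥ < y) (hyu : y < u) (hu1 : u < ⊤)
    (hxy : x ⊔ y = ⊤) (hxu : x ⊔ u = ⊤) (hzy : z ⊔ y = ⊤) (hzu : z ⊔ u = ⊤)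
    (hxy' : x ⊓ y = ⊥) (hxu' : x ⊓ u = ⊥) (hzy' : z ⊓ y = ⊥) (hzu' : z ⊓ u = ⊥)
    (hclosed : ∀ w ∈ ({⊥, x, y, z, u, ⊤} : Set L), c w ∈ ({⊥, x, y, z, u, ⊤} : Set L)) :
    ¬ (∀ a b e : L, (a ⊔ c b) ⊓ b ≤ e ↔ a ≤ c b ⊔ (b ⊓ e)) := by
  intro h
  have hcz := hclosed z (by simp)
  have hsup : z ⊔ c z = ⊤ := (hcomp z).1
  have hinf : z ⊓ c z = ⊥ := (hcomp z).2
  have hzne : z ≠ ⊤ := hz1.ne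
  have hzne0 : z ≠ ⊥ := (h0x.trans hxz).ne'
  have hczx : c z ⊔ x = ⊤ := by
    simp only [Set.mem_insert_iff, Set.mem_singleton_iff] at hcz
    rcases hcz with h1 | h1 | h1 | h1 | h1 | h1
    · rw [h1, sup_bot_eq] at hsup; exact absurd hsup hzne
    · rw [h1, sup_eq_left.mpr hxz.le] at hsup; exact absurd hsup hzne
    · rw [h1, sup_comm]; exact hxy
    · rw [h1, inf_idem] at hinf; exact absurd hinf hzne0
    · rw [h1, sup_comm]; exact hxu
    · rw [h1, inf_top_eq] at hinf; exact absurd hinf hzne0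
  have := (h z z x).mpr (by rw [inf_eq_right.mpr hxz.le, hczx]; exact le_top)
  rw [hsup, top_inf_eq] at this
  exact absurd this hxz.not_ge
end
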